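/- arXiv:2412.08759 — 2 statements merged into one kernel-verified Lean document; each statement's English description precedes it below -/
import Mathlib

section
/- Let ξ > 4 and suppose ξ₀ ∈ [0, ξ] and ξ̃₀ ∈ [ξ, ∞) satisfy (1/2)(ξ+ξ₀) = (ξ-ξ₀)⁴ and (1/2)(ξ+ξ̃₀) = (ξ̃₀-ξ)⁴. Then ξ - ξ^{1/4} < ξ₀ < ξ < ξ̃₀ < ξ + 2ξ^{1/4}. -/
theorem stmt_7 (ξ ξ₀ ξt₀ : ℝ) (hξ : 4 < ξ)
    (h₀ : ξ₀ ∈ Set.Icc 0 ξ) (ht₀ : ξt₀ ∈ Set.Ici ξ)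
    (e₀ : (1/2) * (ξ + ξ₀) = (ξ - ξ₀)^4)
    (et₀ : (1/2) * (ξ + ξt₀) = (ξt₀ - ξ)^4) :
    ξ - ξ ^ ((1:ℝ)/4) < ξ₀ ∧ ξ₀ < ξ ∧ ξ < ξt₀ ∧ ξt₀ < ξ + 2 * ξ ^ ((1:ℝ)/4) := by
  obtain ⟨h0l, h0r⟩ := h₀
  have htl : ξ ≤ ξt₀ := ht₀
  set r := ξ ^ ((1:ℝ)/4) with hr
  have hξ0 : (0:ℝ) ≤ ξ := by linarith
  have hrpos : 0 < r := Real.rpow_pos_of_pos (by linarith) _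
  have hr4 : r ^ 4 = ξ := by
    rw [hr, ← Real.rpow_natCast (ξ ^ ((1:ℝ)/4)) 4, ← Real.rpow_mul hξ0]
    norm_num
  have hr2 : 2 < r ^ 2 := by nlinarith [sq_nonneg (r^2 - 2), sq_nonneg r]
  -- ξ₀ < ξ
  have h1 : ξ₀ < ξ := by
    rcases lt_or_eq_of_le h0r with h | h
    · exact h
    · exfalso; rw [h] at e₀; simp at e₀; nlinarith
  -- ξ < ξt₀
  have h2 : ξ < ξt₀ := by
    rcases lt_or_eq_of_le htl with h | h
    · exact h
    · exfalso; rw [← h] at et₀; simp at et₀; nlinarith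
  refine ⟨?_, h1, h2, ?_⟩
  · by_contra hc
    push_neg at hc
    have hd : r ≤ ξ - ξ₀ := by linarith
    have : r ^ 4 ≤ (ξ - ξ₀) ^ 4 := pow_le_pow_left₀ (le_of_lt hrpos) hd 4
    nlinarith
  · by_contra hc
    push_neg at hc
    have hd : 2 * r ≤ ξt₀ - ξ := by linarith
    have h16 : (2 * r) ^ 4 ≤ (ξt₀ - ξ) ^ 4 :=
      pow_le_pow_left₀ (by positivity) hd 4
    have hr1 : 1 < r := by nlinarith
    have hr3 : 2 < r ^ 3 := by nlinarith
    have hd30 : 30 * r ^ 4 ≤ ξt₀ - ξ := by nlinarith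
    have hc3 := pow_le_pow_left₀ (by positivity : (0:ℝ) ≤ 2 * r) hd 3
    have hcube : (2 * r) ^ 3 * (ξt₀ - ξ) ≤ (ξt₀ - ξ) ^ 4 := by
      nlinarith [mul_le_mul_of_nonneg_right hc3 (by linarith : (0:ℝ) ≤ ξt₀ - ξ)]
    nlinarith [mul_le_mul_of_nonneg_left hd30 (le_of_lt (by positivity : (0:ℝ) < 8 * r ^ 3))]
end

section
/- Let β > 1/2, b > 1/4 and a ≤ 2b. There exists C > 0 such that for all (ξ, τ) ∈ ℝ² with τ > -ξ²/2 or τ < -3ξ²/2, one has (1+|ξ|)^{2a} (1+|τ+ξ²|)^{-2b} ∫_ℝ (1 + |τ + (ξ-ξ₁)⁵ + ξ₁²|)^{-(4b-1)} (1+|ξ₁|)^{-2β} dξ₁ ≤ C. -/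
open MeasureTheory

theorem stmt_8 (β b a : ℝ) (hβ : 1/2 < β) (hb : 1/4 < b) (ha : a ≤ 2*b) :
    ∃ C > 0, ∀ ξ τ : ℝ, (τ > -ξ^2/2 ∨ τ < -3*ξ^2/2) →
      (1 + |ξ|) ^ (2*a) * (1 + |τ + ξ^2|) ^ (-(2*b)) *
        (∫ ξ₁ : ℝ, (1 + |τ + (ξ - ξ₁)^5 + ξ₁^2|) ^ (-(4*b - 1)) * (1 + |ξ₁|) ^ (-(2*β))) ≤ C := by
  have hint : Integrable (fun x : ℝ => (1 + ‖x‖) ^ (-(2*β))) := by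
    apply integrable_one_add_norm (E := ℝ)
    simp only [Module.finrank_self, Nat.cast_one]
    linarith
  set I := ∫ x : ℝ, (1 + |x|) ^ (-(2*β)) with hI
  have hInonneg : 0 ≤ I :=
    integral_nonneg fun x => Real.rpow_nonneg (by positivity) _
  have h4pos : (0:ℝ) < (4:ℝ) ^ (2*b) := Real.rpow_pos_of_pos (by norm_num) _
  refine ⟨(4:ℝ)^(2*b) * (I + 1), by positivity, ?_⟩
  intro ξ τ hB
  have hle : (∫ ξ₁ : ℝ, (1 + |τ + (ξ - ξ₁)^5 + ξ₁^2|) ^ (-(4*b - 1)) * (1 + |ξ₁|) ^ (-(2*β))) ≤ I := by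
    rw [hI]
    apply integral_mono_of_nonneg
    · filter_upwards with x
      positivity
    · simpa [Real.norm_eq_abs] using hint
    · filter_upwards with x
      have h1 : (1 + |τ + (ξ - x)^5 + x^2|) ^ (-(4*b - 1)) ≤ 1 :=
        Real.rpow_le_one_of_one_le_of_nonpos (le_add_of_nonneg_right (abs_nonneg _)) (by linarith)
      calc (1 + |τ + (ξ - x)^5 + x^2|) ^ (-(4*b - 1)) * (1 + |x|) ^ (-(2*β))
          ≤ 1 * (1 + |x|) ^ (-(2*β)) := by
            apply mul_le_mul_of_nonneg_right h1 (Real.rpow_nonneg (by positivity) _)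
        _ = (1 + |x|) ^ (-(2*β)) := one_mul _
  have hJnonneg : 0 ≤ ∫ ξ₁ : ℝ, (1 + |τ + (ξ - ξ₁)^5 + ξ₁^2|) ^ (-(4*b - 1)) * (1 + |ξ₁|) ^ (-(2*β)) :=
    integral_nonneg fun x => by positivity
  -- prefactor bound
  have habs : ξ^2/2 ≤ |τ + ξ^2| := by
    rcases hB with h | h
    · rw [abs_of_nonneg (by nlinarith)]; nlinarith
    · rw [abs_of_nonpos (by nlinarith)]; nlinarith
  set u : ℝ := 1 + |ξ| with hu
  set v : ℝ := 1 + |τ + ξ^2| with hv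
  have hu1 : (1:ℝ) ≤ u := le_add_of_nonneg_right (abs_nonneg ξ)
  have hu0 : (0:ℝ) < u := lt_of_lt_of_le one_pos hu1
  have hv0 : (0:ℝ) < v := lt_of_lt_of_le one_pos (le_add_of_nonneg_right (abs_nonneg _))
  have hsq : u^2 ≤ 4 * v := by
    have h1 : |ξ|^2 = ξ^2 := sq_abs ξ
    have h2 : 2*|ξ| ≤ 1 + ξ^2 := by nlinarith [sq_abs ξ, sq_nonneg (|ξ| - 1)]
    rw [hu, hv]; nlinarith [habs]
  have hkey : u ^ (2*a) ≤ (4:ℝ)^(2*b) * v ^ (2*b) := by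
    have step1 : u ^ (2*a) ≤ u ^ (4*b) :=
      Real.rpow_le_rpow_of_exponent_le hu1 (by linarith)
    have step2 : u ^ (4*b) = (u^2) ^ (2*b) := by
      rw [← Real.rpow_natCast u 2, ← Real.rpow_mul (le_of_lt hu0)]
      norm_num; ring_nf
    have step3 : (u^2 : ℝ) ^ (2*b) ≤ (4*v) ^ (2*b) :=
      Real.rpow_le_rpow (sq_nonneg u) hsq (by linarith)
    have step4 : ((4:ℝ)*v) ^ (2*b) = (4:ℝ)^(2*b) * v^(2*b) :=
      Real.mul_rpow (by norm_num) (le_of_lt hv0)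
    calc u ^ (2*a) ≤ u ^ (4*b) := step1
      _ = (u^2) ^ (2*b) := step2
      _ ≤ (4*v) ^ (2*b) := step3
      _ = (4:ℝ)^(2*b) * v^(2*b) := step4
  have hpre : u ^ (2*a) * v ^ (-(2*b)) ≤ (4:ℝ)^(2*b) := by
    have := mul_le_mul_of_nonneg_right hkey (Real.rpow_nonneg (le_of_lt hv0) (-(2*b)))
    calc u ^ (2*a) * v ^ (-(2*b)) ≤ (4:ℝ)^(2*b) * v^(2*b) * v^(-(2*b)) := this
      _ = (4:ℝ)^(2*b) * (v^(2*b) * v^(-(2*b))) := by ring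
      _ = (4:ℝ)^(2*b) := by
          rw [← Real.rpow_add hv0]
          simp
  have hprenn : 0 ≤ u ^ (2*a) * v ^ (-(2*b)) := by positivity
  calc u ^ (2*a) * v ^ (-(2*b)) *
        (∫ ξ₁ : ℝ, (1 + |τ + (ξ - ξ₁)^5 + ξ₁^2|) ^ (-(4*b - 1)) * (1 + |ξ₁|) ^ (-(2*β)))
      ≤ (4:ℝ)^(2*b) * I := mul_le_mul hpre hle hJnonneg (le_of_lt h4pos)
    _ ≤ (4:ℝ)^(2*b) * (I + 1) := by nlinarith
end
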